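/- arXiv:math/0701111 — 8 statements merged into one kernel-verified Lean document; each statement's English description precedes it below -/
import Mathlib

section
/- If an equilateral triangle has all three vertices in ℤ³, with one vertex at the origin O and the other two vertices P and Q, then P and Q lie in a plane through the origin with equation ax + by + cz = 0 where a, b, c, d are integers satisfying a² + b² + c² = 3d². -/
/-- Squared Euclidean distance between two points of `ℤ³`. -/
def d2 (P Q : ℤ × ℤ × ℤ) : ℤ :=
  (P.1 - Q.1) ^ 2 + (P.2.1 - Q.2.1) ^ 2 + (P.2.2 - Q.2.2) ^ 2

theorem triangle_plane (P Q : ℤ × ℤ × ℤ)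
    (hP : P ≠ (0, 0, 0)) (hQ : Q ≠ (0, 0, 0)) (hPQ : P ≠ Q)
    (h1 : d2 (0, 0, 0) P = d2 (0, 0, 0) Q)
    (h2 : d2 (0, 0, 0) P = d2 P Q) :
    ∃ a b c d : ℤ, a ^ 2 + b ^ 2 + c ^ 2 = 3 * d ^ 2 ∧
      (a, b, c) ≠ (0, 0, 0) ∧
      a * P.1 + b * P.2.1 + c * P.2.2 = 0 ∧
      a * Q.1 + b * Q.2.1 + c * Q.2.2 = 0 := by
  obtain ⟨p1, p2, p3⟩ := P
  obtain ⟨q1, q2, q3⟩ := Q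
  simp only [d2] at h1 h2
  simp only [ne_eq, Prod.mk.injEq, not_and] at hP hQ
  refine ⟨p2*q3 - p3*q2, p3*q1 - p1*q3, p1*q2 - p2*q1, p1*q1 + p2*q2 + p3*q3,
    ?_, ?_, by ring, by ring⟩
  · linear_combination (q1^2+q2^2+q3^2) * h1 -
      (q1^2+q2^2+q3^2 + 2*(p1*q1+p2*q2+p3*q3)) * h2
  · intro h
    simp only [Prod.mk.injEq] at h
    obtain ⟨ha, hb, hc⟩ := h
    have hd : q1^2 + q2^2 + q3^2 = 0 := by nlinarith [sq_nonneg (p1*q1+p2*q2+p3*q3)]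
    have : q1 = 0 ∧ q2 = 0 ∧ q3 = 0 := by
      constructor
      · nlinarith [sq_nonneg q1, sq_nonneg q2, sq_nonneg q3]
      constructor
      · nlinarith [sq_nonneg q1, sq_nonneg q2, sq_nonneg q3]
      · nlinarith [sq_nonneg q1, sq_nonneg q2, sq_nonneg q3]
    exact hQ this.1 this.2.1 this.2.2
end

section
/- If an equilateral triangle has all vertices in ℤ³, then the square of its side length is an even integer, i.e., the side length is of the form √(2q) for some positive integer q. -/
theorem side_sq_even (P Q R : ℤ × ℤ × ℤ)
    (hPQ : P ≠ Q) (hQR : Q ≠ R) (hPR : P ≠ R)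
    (h1 : d2 P Q = d2 Q R) (h2 : d2 Q R = d2 P R) :
    ∃ q : ℤ, 0 < q ∧ d2 P Q = 2 * q := by
  refine ⟨-((P.1 - Q.1) * (Q.1 - R.1) + (P.2.1 - Q.2.1) * (Q.2.1 - R.2.1) +
      (P.2.2 - Q.2.2) * (Q.2.2 - R.2.2)), ?_, ?_⟩
  · have heven : d2 P Q = 2 * -((P.1 - Q.1) * (Q.1 - R.1) + (P.2.1 - Q.2.1) * (Q.2.1 - R.2.1) +
        (P.2.2 - Q.2.2) * (Q.2.2 - R.2.2)) := by
      unfold d2 at h1 h2 ⊢; linarith [h1, h2, sq_nonneg (P.1 - R.1)]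
    have hne : d2 P Q ≠ 0 := by
      intro h
      apply hPQ
      unfold d2 at h
      have e1 : (P.1 - Q.1) ^ 2 = 0 := by nlinarith [sq_nonneg (P.1 - Q.1), sq_nonneg (P.2.1 - Q.2.1), sq_nonneg (P.2.2 - Q.2.2)]
      have e2 : (P.2.1 - Q.2.1) ^ 2 = 0 := by nlinarith [sq_nonneg (P.1 - Q.1), sq_nonneg (P.2.1 - Q.2.1), sq_nonneg (P.2.2 - Q.2.2)]
      have e3 : (P.2.2 - Q.2.2) ^ 2 = 0 := by nlinarith [sq_nonneg (P.1 - Q.1), sq_nonneg (P.2.1 - Q.2.1), sq_nonneg (P.2.2 - Q.2.2)]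
      have f1 : P.1 = Q.1 := by nlinarith [e1]
      have f2 : P.2.1 = Q.2.1 := by nlinarith [e2]
      have f3 : P.2.2 = Q.2.2 := by nlinarith [e3]
      exact Prod.ext f1 (Prod.ext f2 f3)
    have hpos : 0 < d2 P Q := by
      rcases lt_or_eq_of_le (show 0 ≤ d2 P Q by unfold d2; positivity) with h | h
      · exact h
      · exact absurd h.symm hne
    linarith [heven, hpos]
  · unfold d2 at h1 h2 ⊢; nlinarith [h1, h2]
end

section
/- If an equilateral triangle has all vertices in ℤ³, then its side length is of the form √(2(m² − mn + n²)) for some integers m, n. -/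
/-!
With `a = P - Q` and `c = P - R` the triangle is equilateral iff `|a|² = |c|² = 2t` and `a · c = t`;
we show that `t` is a norm `m² - mn + n²` from the Eisenstein integers `ℤ[ω]`.
The numbers `zᵢ = aᵢ + cᵢω` satisfy `∑ zᵢ² = 0` and `∑ N zᵢ = 3t`; their discrete Fourier
transform `u, f, g` over `ℤ/3` satisfies `u² + 2fg = 0` and `N u + N f + N g = 9t`.
As `ℤ[ω]` is Euclidean and `2` is prime in it, unique factorisation gives, up to units and the
order of `f, g`, `u = 2dαβ`, `f = 2dα²`, `g = dβ²`, so `9t = N d · C²` with `C = 2 N α + N β`.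
Either `3 ∣ C`, or `9 ∣ N d`, which forces `3 ∣ d`; either way `t` is a norm.
-/

/-- `ω² = -1 - ω`, so the norm of `x + yω` is `x² - xy + y²`. -/
abbrev EisensteinInt : Type := QuadraticAlgebra ℤ (-1) (-1)

notation "ℤ[ω]" => EisensteinInt

theorem Int.exists_abs_two_mul_sub_mul_le (a : ℤ) {n : ℤ} (hn : 0 < n) :
    ∃ q, |2 * (a - n * q)| ≤ n := by
  refine ⟨(2 * a + n) / (2 * n), abs_le.mpr ⟨?_, ?_⟩⟩ <;>
  · have := Int.emod_add_mul_ediv (2 * a + n) (2 * n)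
    have := Int.emod_nonneg (2 * a + n) (by omega : 2 * n ≠ 0)
    have := Int.emod_lt_of_pos (2 * a + n) (by omega : 0 < 2 * n)
    linarith

namespace EisensteinInt

open QuadraticAlgebra

theorem norm_eq (z : ℤ[ω]) : z.norm = z.re ^ 2 - z.re * z.im + z.im ^ 2 := by
  rw [norm_def]; ring

theorem four_mul_norm (z : ℤ[ω]) : 4 * z.norm = (2 * z.re - z.im) ^ 2 + 3 * z.im ^ 2 := by
  rw [norm_eq]; ring

theorem norm_nonneg (z : ℤ[ω]) : 0 ≤ z.norm := by
  nlinarith [four_mul_norm z, sq_nonneg (2 * z.re - z.im), sq_nonneg z.im]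

theorem norm_eq_zero_iff {z : ℤ[ω]} : z.norm = 0 ↔ z = 0 := by
  refine ⟨fun h => ?_, fun h => h ▸ norm_zero⟩
  have h4 := four_mul_norm z
  have him : z.im = 0 := by nlinarith [sq_nonneg (2 * z.re - z.im), sq_nonneg z.im]
  have hre : z.re = 0 := by nlinarith
  ext <;> simpa

theorem norm_pos {z : ℤ[ω]} (hz : z ≠ 0) : 0 < z.norm :=
  (norm_nonneg z).lt_of_ne (Ne.symm (mt norm_eq_zero_iff.mp hz))

instance : IsDomain ℤ[ω] :=
  have : NoZeroDivisors ℤ[ω] := ⟨fun {x y} h => by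
    simpa [norm_eq_zero_iff] using congrArg QuadraticAlgebra.norm h⟩
  NoZeroDivisors.to_isDomain _

theorem norm_eq_one_of_isUnit {z : ℤ[ω]} (hz : IsUnit z) : z.norm = 1 := by
  rcases Int.isUnit_iff.mp (isUnit_iff_norm_isUnit.mp hz) with h | h
  · exact h
  · linarith [norm_nonneg z]

theorem norm_eq_of_associated {x y : ℤ[ω]} (h : Associated x y) : x.norm = y.norm := by
  obtain ⟨u, rfl⟩ := h
  rw [map_mul, norm_eq_one_of_isUnit u.isUnit, mul_one]

theorem exists_norm_sub_intCast_mul_lt (c : ℤ[ω]) {n : ℤ} (hn : 0 < n) :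
    ∃ q : ℤ[ω], (c - n * q).norm < n ^ 2 := by
  obtain ⟨q₁, h₁⟩ := Int.exists_abs_two_mul_sub_mul_le c.re hn
  obtain ⟨q₂, h₂⟩ := Int.exists_abs_two_mul_sub_mul_le c.im hn
  refine ⟨⟨q₁, q₂⟩, ?_⟩
  obtain ⟨h₁l, h₁u⟩ := abs_le.mp h₁
  obtain ⟨h₂l, h₂u⟩ := abs_le.mp h₂
  have hre : (c - n * ⟨q₁, q₂⟩).re = c.re - n * q₁ := by simp
  have him : (c - n * ⟨q₁, q₂⟩).im = c.im - n * q₂ := by simp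
  rw [norm_eq, hre, him]
  nlinarith [mul_nonneg (sub_nonneg.2 h₁u) (sub_nonneg.2 h₂u),
    mul_nonneg (neg_le_iff_add_nonneg.1 h₁l) (neg_le_iff_add_nonneg.1 h₂l)]

theorem exists_norm_sub_mul_lt (x : ℤ[ω]) {y : ℤ[ω]} (hy : y ≠ 0) :
    ∃ q : ℤ[ω], (x - y * q).norm < y.norm := by
  obtain ⟨q, hq⟩ := exists_norm_sub_intCast_mul_lt (x * star y) (norm_pos hy)
  refine ⟨q, lt_of_mul_lt_mul_left ?_ (norm_nonneg y)⟩
  have : star y * (x - y * q) = x * star y - (y.norm : ℤ[ω]) * q := by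
    have h := algebraMap_norm_eq_mul_star y
    rw [algebraMap_int_eq, eq_intCast] at h
    rw [h]; ring
  calc y.norm * (x - y * q).norm = (x * star y - (y.norm : ℤ[ω]) * q).norm := by
        rw [← this, map_mul, QuadraticAlgebra.norm_star]
    _ < y.norm ^ 2 := hq
    _ = y.norm * y.norm := sq _

noncomputable instance : EuclideanDomain ℤ[ω] where
  __ := (inferInstance : CommRing ℤ[ω])
  quotient x y := if hy : y = 0 then 0 else (exists_norm_sub_mul_lt x hy).choose
  quotient_zero x := dif_pos rfl
  remainder x y := x - y * if hy : y = 0 then 0 else (exists_norm_sub_mul_lt x hy).choose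
  quotient_mul_add_remainder_eq x y := add_sub_cancel _ _
  r := InvImage (· < ·) fun z : ℤ[ω] => z.norm.natAbs
  r_wellFounded := InvImage.wf _ wellFounded_lt
  remainder_lt x y hy := by
    simp only [InvImage, dif_neg hy]
    have := (exists_norm_sub_mul_lt x hy).choose_spec
    have := norm_nonneg (x - y * (exists_norm_sub_mul_lt x hy).choose)
    omega
  mul_left_not_lt x y hy := by
    simp only [InvImage, map_mul, not_lt]
    have := norm_pos hy
    have := norm_nonneg x
    rw [Int.natAbs_mul]
    exact Nat.le_mul_of_pos_right _ (by omega)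

theorem intCast_dvd_iff {r : ℤ} {z : ℤ[ω]} : (r : ℤ[ω]) ∣ z ↔ r ∣ z.re ∧ r ∣ z.im :=
  algebraMap_dvd_iff

theorem norm_two : (2 : ℤ[ω]).norm = 4 := by
  simp [norm_eq]

theorem norm_three : (3 : ℤ[ω]).norm = 9 := by
  simp [norm_eq]

theorem prime_two : Prime (2 : ℤ[ω]) := by
  refine ⟨two_ne_zero, fun h => by simpa [norm_two] using norm_eq_one_of_isUnit h,
    fun x y hxy => ?_⟩
  have key : ∀ a b c d : ZMod 2, a * c - b * d = 0 → a * d + b * c - b * d = 0 →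
      a = 0 ∧ b = 0 ∨ c = 0 ∧ d = 0 := by decide
  have mod_two : ∀ n : ℤ, 2 ∣ n ↔ (n : ZMod 2) = 0 := fun n => by
    rw [ZMod.intCast_zmod_eq_zero_iff_dvd]; rfl
  rw [← Int.cast_two] at hxy ⊢
  simp only [intCast_dvd_iff, re_mul, im_mul, mod_two] at hxy ⊢
  push_cast at hxy ⊢
  exact key _ _ _ _ (by linear_combination hxy.1) (by linear_combination hxy.2)

theorem three_dvd_of_nine_dvd_norm {z : ℤ[ω]} (h : 9 ∣ z.norm) : 3 ∣ z := by
  have key : ∀ a b : ZMod 9, a ^ 2 - a * b + b ^ 2 = 0 → 3 * a = 0 ∧ 3 * b = 0 := by decide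
  have mod_nine : ∀ n : ℤ, 9 ∣ n ↔ (n : ZMod 9) = 0 := fun n => by
    rw [ZMod.intCast_zmod_eq_zero_iff_dvd]; rfl
  rw [norm_eq, mod_nine] at h
  push_cast at h
  obtain ⟨hre, him⟩ := key _ _ h
  have hre' : 9 ∣ 3 * z.re := (mod_nine _).mpr (by push_cast; exact hre)
  have him' : 9 ∣ 3 * z.im := (mod_nine _).mpr (by push_cast; exact him)
  rw [← Int.cast_three, intCast_dvd_iff]
  omega

theorem exists_norm_eq_sq_of_isCoprime_mul_eq_sq {x y c : ℤ[ω]} (hxy : IsCoprime x y)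
    (h : x * y = c ^ 2) :
    ∃ A B : ℤ, x.norm = A ^ 2 ∧ y.norm = B ^ 2 ∧ c.norm = A * B := by
  obtain ⟨α, hα⟩ := exists_associated_pow_of_mul_eq_pow' hxy h
  obtain ⟨β, hβ⟩ := exists_associated_pow_of_mul_eq_pow' hxy.symm ((mul_comm y x).trans h)
  have hx : x.norm = α.norm ^ 2 := by rw [← norm_eq_of_associated hα, map_pow]
  have hy : y.norm = β.norm ^ 2 := by rw [← norm_eq_of_associated hβ, map_pow]
  refine ⟨α.norm, β.norm, hx, hy, ?_⟩
  have : c.norm ^ 2 = (α.norm * β.norm) ^ 2 := by rw [← map_pow, ← h, map_mul, hx, hy]; ring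
  exact (sq_eq_sq₀ (norm_nonneg c) (mul_nonneg (norm_nonneg α) (norm_nonneg β))).mp this

theorem exists_sum_norm_eq_sq_of_isCoprime {u f g : ℤ[ω]} (hfg : IsCoprime f g)
    (h : u ^ 2 + 2 * (f * g) = 0) : ∃ C : ℤ, u.norm + f.norm + g.norm = C ^ 2 := by
  obtain ⟨v, rfl⟩ : 2 ∣ u :=
    prime_two.dvd_of_dvd_pow (n := 2) ⟨-(f * g), by linear_combination h⟩
  have hfg₂ : f * g = -(2 * v ^ 2) := mul_left_cancel₀ two_ne_zero (by linear_combination h)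
  wlog h2f : 2 ∣ f generalizing f g
  · have h2g : 2 ∣ g := (prime_two.dvd_or_dvd ⟨-v ^ 2, by rw [hfg₂]; ring⟩).resolve_left h2f
    obtain ⟨C, hC⟩ := this hfg.symm (by linear_combination h) (by linear_combination hfg₂) h2g
    exact ⟨C, by linear_combination hC⟩
  obtain ⟨w, rfl⟩ := h2f
  have hwg : w * -g = v ^ 2 := mul_left_cancel₀ two_ne_zero (by linear_combination -hfg₂)
  obtain ⟨A, B, hw, hg, hv⟩ :=
    exists_norm_eq_sq_of_isCoprime_mul_eq_sq hfg.of_mul_left_right.neg_right hwg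
  rw [QuadraticAlgebra.norm_neg] at hg
  refine ⟨2 * A + B, ?_⟩
  simp only [map_mul, norm_two, hw, hg, hv]
  ring

theorem exists_sum_norm_eq_norm_mul_sq {u f g : ℤ[ω]} (h : u ^ 2 + 2 * (f * g) = 0) :
    ∃ (d : ℤ[ω]) (C : ℤ), u.norm + f.norm + g.norm = d.norm * C ^ 2 := by
  rcases eq_or_ne f 0 with rfl | hf
  · have hu : u = 0 := (pow_eq_zero_iff two_ne_zero).mp (by linear_combination h)
    exact ⟨g, 1, by simp [hu]⟩
  obtain ⟨f', g', d, hfg', rfl, rfl⟩ := UniqueFactorizationMonoid.exists_reduced_factors f hf g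
  have hd : d ≠ 0 := left_ne_zero_of_mul hf
  obtain ⟨u', rfl⟩ : d ∣ u := (UniqueFactorizationMonoid.pow_dvd_pow_iff_dvd two_ne_zero).mp
    ⟨-(2 * (f' * g')), by linear_combination h⟩
  have h' : u' ^ 2 + 2 * (f' * g') = 0 := by
    refine (mul_eq_zero.mp ?_).resolve_left (pow_ne_zero 2 hd)
    linear_combination h
  obtain ⟨C, hC⟩ := exists_sum_norm_eq_sq_of_isCoprime hfg'.isCoprime h'
  exact ⟨d, C, by simp only [map_mul]; linear_combination d.norm * hC⟩

theorem exists_norm_eq_of_nine_mul_eq {t C : ℤ} {d : ℤ[ω]} (h : 9 * t = d.norm * C ^ 2) :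
    ∃ z : ℤ[ω], z.norm = t := by
  by_cases h3 : 3 ∣ C
  · obtain ⟨C', rfl⟩ := h3
    exact ⟨d * C', by rw [map_mul, norm_intCast, Int.cast_id]; linarith⟩
  have h9 : 3 ^ 2 ∣ d.norm :=
    (Int.prime_three.coprime_iff_not_dvd.mpr h3).pow (m := 2) (n := 2)
      |>.dvd_of_dvd_mul_right ⟨t, by linarith⟩
  obtain ⟨e, rfl⟩ := three_dvd_of_nine_dvd_norm (by simpa using h9)
  rw [map_mul, norm_three] at h
  exact ⟨e * C, by rw [map_mul, norm_intCast, Int.cast_id]; linarith⟩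

/-- `(z₁ + z₂ + z₃, z₁ + ωz₂ + ω²z₃, z₁ + ω²z₂ + ωz₃)` is the discrete Fourier transform of
`(z₁, z₂, z₃)` over `ℤ/3`; the next lemma is Parseval's identity for it. -/
theorem sq_add_two_mul_eq (z₁ z₂ z₃ : ℤ[ω]) :
    (z₁ + z₂ + z₃) ^ 2 + 2 * ((z₁ + ω * z₂ + ω ^ 2 * z₃) * (z₁ + ω ^ 2 * z₂ + ω * z₃)) =
      3 * (z₁ ^ 2 + z₂ ^ 2 + z₃ ^ 2) := by
  ext <;>
    simp only [pow_two, re_add, im_add, re_mul, im_mul, re_ofNat, im_ofNat, omega_re, omega_im] <;>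
    ring

theorem norm_add_norm_add_norm_eq (z₁ z₂ z₃ : ℤ[ω]) :
    (z₁ + z₂ + z₃).norm + (z₁ + ω * z₂ + ω ^ 2 * z₃).norm + (z₁ + ω ^ 2 * z₂ + ω * z₃).norm =
      3 * (z₁.norm + z₂.norm + z₃.norm) := by
  simp only [norm_eq, pow_two, re_add, im_add, re_mul, im_mul, omega_re, omega_im]
  ring

theorem exists_norm_eq_of_sum_sq_eq_zero {z₁ z₂ z₃ : ℤ[ω]} {t : ℤ}
    (h : z₁ ^ 2 + z₂ ^ 2 + z₃ ^ 2 = 0) (ht : z₁.norm + z₂.norm + z₃.norm = 3 * t) :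
    ∃ z : ℤ[ω], z.norm = t := by
  have key := sq_add_two_mul_eq z₁ z₂ z₃
  rw [h, mul_zero] at key
  obtain ⟨d, C, hdC⟩ := exists_sum_norm_eq_norm_mul_sq key
  rw [norm_add_norm_add_norm_eq, ht] at hdC
  exact exists_norm_eq_of_nine_mul_eq (d := d) (C := C) (by linear_combination hdC)

theorem exists_norm_eq_of_equilateral {a c : Fin 3 → ℤ} {t : ℤ} (ha : ∑ i, a i ^ 2 = 2 * t)
    (hc : ∑ i, c i ^ 2 = 2 * t) (hac : ∑ i, a i * c i = t) : ∃ z : ℤ[ω], z.norm = t := by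
  simp only [Fin.sum_univ_three] at ha hc hac
  -- `∑ (aᵢ + cᵢω)² = ∑ aᵢ² + 2 (∑ aᵢcᵢ) ω + (∑ cᵢ²) ω² = 2t (1 + ω + ω²) = 0`
  refine exists_norm_eq_of_sum_sq_eq_zero (z₁ := ⟨a 0, c 0⟩) (z₂ := ⟨a 1, c 1⟩)
    (z₃ := ⟨a 2, c 2⟩) ?_ ?_
  · ext <;> simp only [pow_two, mk_mul_mk, re_add, im_add, re_zero, im_zero]
    · linear_combination ha - hc
    · linear_combination 2 * hac - hc
  · simp only [norm_eq]
    linear_combination ha + hc - hac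

end EisensteinInt

theorem side_form_general (P Q R : ℤ × ℤ × ℤ)
    (h1 : d2 P Q = d2 Q R) (h2 : d2 Q R = d2 P R) :
    ∃ m n : ℤ, d2 P Q = 2 * (m ^ 2 - m * n + n ^ 2) := by
  let a : Fin 3 → ℤ := ![P.1 - Q.1, P.2.1 - Q.2.1, P.2.2 - Q.2.2]
  let c : Fin 3 → ℤ := ![P.1 - R.1, P.2.1 - R.2.1, P.2.2 - R.2.2]
  have hPQ : d2 P Q = ∑ i, a i ^ 2 := by simp [d2, a, Fin.sum_univ_three]
  have hPR : d2 P R = ∑ i, c i ^ 2 := by simp [d2, c, Fin.sum_univ_three]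
  have hQR : d2 Q R = ∑ i, a i ^ 2 + ∑ i, c i ^ 2 - 2 * ∑ i, a i * c i := by
    simp only [d2, a, c, Fin.sum_univ_three, Matrix.cons_val_zero, Matrix.cons_val_one,
      Matrix.cons_val_two, Matrix.head_cons, Matrix.tail_cons]
    ring
  obtain ⟨z, hz⟩ := EisensteinInt.exists_norm_eq_of_equilateral (a := a) (c := c)
    (by linear_combination h2 - hQR + hPR) (by linear_combination hPQ - h1 - hQR) rfl
  exact ⟨z.re, z.im, by rw [← EisensteinInt.norm_eq, hz]; linear_combination hPQ + h2 - hQR + hPR⟩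

theorem side_form (P Q R : ℤ × ℤ × ℤ)
    (hPQ : P ≠ Q) (hQR : Q ≠ R) (hPR : P ≠ R)
    (h1 : d2 P Q = d2 Q R) (h2 : d2 Q R = d2 P R) :
    ∃ m n : ℤ, d2 P Q = 2 * (m ^ 2 - m * n + n ^ 2) :=
  side_form_general P Q R h1 h2
end

section
/- The maximum side length of an equilateral triangle whose three vertices lie in the cube [0, r]³ is r√2; that is, every equilateral triangle inscribed in [0, r]³ has side length at most r√2, and this bound is attained. -/
lemma tri_coord (r p q s : ℝ) (hp : p ∈ Set.Icc 0 r) (hq : q ∈ Set.Icc 0 r)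
    (hs : s ∈ Set.Icc 0 r) : (p-q)^2 + (p-s)^2 + (q-s)^2 ≤ 2*r^2 := by
  obtain ⟨hp1, hp2⟩ := hp
  obtain ⟨hq1, hq2⟩ := hq
  obtain ⟨hs1, hs2⟩ := hs
  have h1 : (p-q)^2 ≤ r^2 := by nlinarith
  have h2 : (p-s)^2 ≤ r^2 := by nlinarith
  have h3 : (q-s)^2 ≤ r^2 := by nlinarith
  rcases le_or_gt ((p-q)*(p-s)) 0 with h | h
  · nlinarith
  · nlinarith [mul_pos_iff.mp h]

lemma dist_sq_eq (x y : EuclideanSpace ℝ (Fin 3)) :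
    (dist x y)^2 = ∑ i, (x i - y i)^2 := by
  rw [EuclideanSpace.dist_eq, Real.sq_sqrt (by positivity)]
  simp [Real.dist_eq, sq_abs]

lemma euclid_dist3 (x y : Fin 3 → ℝ) :
    dist ((WithLp.equiv 2 (Fin 3 → ℝ)).symm x) ((WithLp.equiv 2 (Fin 3 → ℝ)).symm y)
      = Real.sqrt ((x 0 - y 0)^2 + (x 1 - y 1)^2 + (x 2 - y 2)^2) := by
  rw [EuclideanSpace.dist_eq, Fin.sum_univ_three]
  simp [Real.dist_eq, sq_abs]

theorem max_eq_triangle_in_cube (r : ℝ) (hr : 0 < r) :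
    (∀ P Q R : EuclideanSpace ℝ (Fin 3),
      (∀ i, P i ∈ Set.Icc 0 r) → (∀ i, Q i ∈ Set.Icc 0 r) → (∀ i, R i ∈ Set.Icc 0 r) →
      dist P Q = dist Q R → dist Q R = dist P R →
      dist P Q ≤ r * Real.sqrt 2) ∧
    (∃ P Q R : EuclideanSpace ℝ (Fin 3),
      P ≠ Q ∧ Q ≠ R ∧ P ≠ R ∧
      (∀ i, P i ∈ Set.Icc 0 r) ∧ (∀ i, Q i ∈ Set.Icc 0 r) ∧ (∀ i, R i ∈ Set.Icc 0 r) ∧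
      dist P Q = dist Q R ∧ dist Q R = dist P R ∧ dist P Q = r * Real.sqrt 2) := by
  have h2r : (r * Real.sqrt 2)^2 = 2 * r^2 := by
    rw [mul_pow, Real.sq_sqrt (by norm_num : (0:ℝ) ≤ 2)]; ring
  constructor
  · intro P Q R hP hQ hR e1 e2
    have hPQ := dist_sq_eq P Q
    have hQR := dist_sq_eq Q R
    have hPR := dist_sq_eq P R
    rw [Fin.sum_univ_three] at hPQ hQR hPR
    have key : ∀ i : Fin 3, (P i - Q i)^2 + (P i - R i)^2 + (Q i - R i)^2 ≤ 2*r^2 :=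
      fun i => tri_coord r (P i) (Q i) (R i) (hP i) (hQ i) (hR i)
    have k0 := key 0; have k1 := key 1; have k2 := key 2
    have e1' : (dist P Q)^2 = (dist Q R)^2 := by rw [e1]
    have e2' : (dist Q R)^2 = (dist P R)^2 := by rw [e2]
    have hsq : (dist P Q)^2 ≤ (r * Real.sqrt 2)^2 := by
      rw [h2r]; linarith [k0, k1, k2, hPQ, hQR, hPR, e1', e2']
    calc dist P Q = Real.sqrt ((dist P Q)^2) := (Real.sqrt_sq dist_nonneg).symm
      _ ≤ Real.sqrt ((r * Real.sqrt 2)^2) := Real.sqrt_le_sqrt hsq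
      _ = r * Real.sqrt 2 := Real.sqrt_sq (by positivity)
  · set P := (WithLp.equiv 2 (Fin 3 → ℝ)).symm ![0, 0, 0] with hPdef
    set Q := (WithLp.equiv 2 (Fin 3 → ℝ)).symm ![r, r, 0] with hQdef
    set R := (WithLp.equiv 2 (Fin 3 → ℝ)).symm ![r, 0, r] with hRdef
    have hs : Real.sqrt (2 * r^2) = r * Real.sqrt 2 := by
      rw [← h2r, Real.sqrt_sq (by positivity)]
    have d1 : dist P Q = r * Real.sqrt 2 := by
      rw [hPdef, hQdef, euclid_dist3, ← hs]; congr 1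
      simp only [Matrix.cons_val_zero, Matrix.cons_val_one, Matrix.head_cons,
        Matrix.cons_val_two, Matrix.tail_cons]; ring
    have d2 : dist Q R = r * Real.sqrt 2 := by
      rw [hQdef, hRdef, euclid_dist3, ← hs]; congr 1
      simp only [Matrix.cons_val_zero, Matrix.cons_val_one, Matrix.head_cons,
        Matrix.cons_val_two, Matrix.tail_cons]; ring
    have d3 : dist P R = r * Real.sqrt 2 := by
      rw [hPdef, hRdef, euclid_dist3, ← hs]; congr 1
      simp only [Matrix.cons_val_zero, Matrix.cons_val_one, Matrix.head_cons,
        Matrix.cons_val_two, Matrix.tail_cons]; ring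
    have hpos : 0 < r * Real.sqrt 2 := by positivity
    refine ⟨P, Q, R, ?_, ?_, ?_, ?_, ?_, ?_, ?_, ?_, ?_⟩
    · exact dist_pos.mp (d1 ▸ hpos)
    · exact dist_pos.mp (d2 ▸ hpos)
    · exact dist_pos.mp (d3 ▸ hpos)
    · intro i; fin_cases i <;> simp [hPdef, hr.le]
    · intro i; fin_cases i <;> simp [hQdef, hr.le]
    · intro i; fin_cases i <;> simp [hRdef, hr.le]
    · rw [d1, d2]
    · rw [d2, d3]
    · exact d1
end

section
/- For all integers m, n, the points O = (0,0,0), P = (4m−3n, m+3n, −m), Q = (3m+n, −3m+4n, −n) form an equilateral triangle (degenerate when m = n = 0), with squared side length 18(m² − mn + n²), and P, Q lie in the plane x + y + 5z = 0. -/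
theorem param_T115 (m n : ℤ) :
    d2 (0, 0, 0) (4 * m - 3 * n, m + 3 * n, -m) = 18 * (m ^ 2 - m * n + n ^ 2) ∧
    d2 (0, 0, 0) (3 * m + n, -3 * m + 4 * n, -n) = 18 * (m ^ 2 - m * n + n ^ 2) ∧
    d2 (4 * m - 3 * n, m + 3 * n, -m) (3 * m + n, -3 * m + 4 * n, -n) =
      18 * (m ^ 2 - m * n + n ^ 2) ∧
    (4 * m - 3 * n) + (m + 3 * n) + 5 * (-m) = 0 ∧
    (3 * m + n) + (-3 * m + 4 * n) + 5 * (-n) = 0 := by refine ⟨?_, ?_, ?_, ?_, ?_⟩ <;> simp [d2] <;> ring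
end

section
/- A positive integer t can be written as m² − mn + n² for some integers m, n if and only if in the prime factorization of t, the prime 2 and every prime congruent to 5 modulo 6 occur to an even exponent. -/
/-!
`m² - mn + n²` is the norm of `m + nω` in `ℤ[ω]`, `ω² + ω + 1 = 0`, so the represented integers
form a multiplicative monoid containing all squares. For a prime `p ≡ 2 (mod 3)` the polynomial
`X² + X + 1` has no root in `ZMod p` (it would have order 3, which does not divide `p - 1`), so
`p ∣ m² - mn + n²` forces `p ∣ m` and `p ∣ n`, and `p` divides out two at a time. Conversely
`3 = 1 + 1 + 1`, and a prime `p ≡ 1 (mod 3)` divides some `c² + c + 1` with `|c| ≤ p / 2`, which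
represents a multiple `kp` with `0 < k < p`; Euler's descent (reduce a representation of `kp`
modulo `k` and compose it with the original one) lowers `k` to `1`.
-/

def loeschian : Submonoid ℤ where
  carrier := {t | ∃ m n : ℤ, t = m ^ 2 - m * n + n ^ 2}
  one_mem' := ⟨1, 0, by ring⟩
  mul_mem' := by
    rintro _ _ ⟨a, b, rfl⟩ ⟨c, d, rfl⟩
    -- `(a + bω)(c + dω) = (ac - bd) + (ad + bc - bd)ω`
    exact ⟨a * c - b * d, a * d + b * c - b * d, by ring⟩

theorem sq_mem_loeschian (a : ℤ) : a ^ 2 ∈ loeschian := ⟨a, 0, by ring⟩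

section OrderedRing

variable {R : Type*} [CommRing R] [LinearOrder R] [IsStrictOrderedRing R]

theorem sq_sub_mul_add_sq_nonneg (m n : R) : 0 ≤ m ^ 2 - m * n + n ^ 2 := by
  nlinarith [sq_nonneg (m - n), sq_nonneg m, sq_nonneg n]

theorem eq_zero_of_sq_sub_mul_add_sq_eq_zero {m n : R} (h : m ^ 2 - m * n + n ^ 2 = 0) :
    m = 0 ∧ n = 0 := by
  constructor <;> nlinarith [sq_nonneg (2 * m - n), sq_nonneg (2 * n - m), sq_nonneg (m - n)]

end OrderedRing

theorem nonneg_of_mem_loeschian {t : ℤ} (ht : t ∈ loeschian) : 0 ≤ t := by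
  obtain ⟨m, n, rfl⟩ := ht
  exact sq_sub_mul_add_sq_nonneg m n

theorem Int.exists_modEq_two_mul_abs_le {k : ℤ} (hk : 0 < k) (a : ℤ) :
    ∃ c, c ≡ a [ZMOD k] ∧ 2 * |c| ≤ k := by
  lift k to ℕ using hk.le
  have hk' : 0 < k := by exact_mod_cast hk
  have hlo := Int.le_bmod (x := a) hk'
  have hhi := Int.bmod_le (x := a) hk'
  refine ⟨a.bmod k, Int.bmod_emod, ?_⟩
  cases abs_cases (a.bmod k) <;> omega

theorem eq_zero_of_sq_sub_mul_add_sq_eq_zero_of_sq_add_self_add_one_ne_zero {F : Type*} [Field F]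
    (hF : ∀ w : F, w ^ 2 + w + 1 ≠ 0) {x y : F} (h : x ^ 2 - x * y + y ^ 2 = 0) :
    x = 0 ∧ y = 0 := by
  by_cases hy : y = 0
  · subst hy
    exact ⟨pow_eq_zero_iff two_ne_zero |>.1 (by simpa using h), rfl⟩
  · refine absurd ?_ (hF (-x / y))
    field_simp
    linear_combination h

namespace ZMod

variable {p : ℕ} [Fact p.Prime]

theorem sq_add_self_add_one_ne_zero (h : p % 3 = 2) (w : ZMod p) : w ^ 2 + w + 1 ≠ 0 := by
  intro hw
  have hw0 : w ≠ 0 := by rintro rfl; simp at hw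
  have hcop : Nat.gcd 3 (p - 1) = 1 :=
    (Nat.Prime.coprime_iff_not_dvd Nat.prime_three).2 (by omega)
  have hw1 : w = 1 := by
    simpa [hcop] using (pow_gcd_eq_one (m := 3)).2
      ⟨by linear_combination (w - 1) * hw, pow_card_sub_one_eq_one hw0⟩
  have h3 : ((3 : ℕ) : ZMod p) = 0 := by rw [hw1] at hw; push_cast; linear_combination hw
  have := (Nat.prime_dvd_prime_iff_eq Fact.out Nat.prime_three).1 ((natCast_eq_zero_iff 3 p).1 h3)
  omega

theorem exists_sq_add_self_add_one_eq_zero (h : p % 3 = 1) : ∃ w : ZMod p, w ^ 2 + w + 1 = 0 := by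
  have : Fact (Nat.Prime 3) := ⟨Nat.prime_three⟩
  obtain ⟨u, hu⟩ := exists_prime_orderOf_dvd_card 3 (G := (ZMod p)ˣ) (by
    rw [card_units]; have := (Fact.out : p.Prime).two_le; omega)
  have hζ : IsPrimitiveRoot (u : ZMod p) 3 := IsPrimitiveRoot.coe_units_iff.2 (hu ▸ .orderOf u)
  refine ⟨u, ?_⟩
  have hsum := hζ.geom_sum_eq_zero (by norm_num)
  simp only [Finset.sum_range_succ, Finset.sum_range_zero] at hsum
  linear_combination hsum

end ZMod

theorem Int.dvd_and_dvd_of_prime_dvd_sq_sub_mul_add_sq {p : ℕ} [Fact p.Prime] (hp : p % 3 = 2)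
    {m n : ℤ} (h : (p : ℤ) ∣ m ^ 2 - m * n + n ^ 2) : (p : ℤ) ∣ m ∧ (p : ℤ) ∣ n := by
  simp only [← ZMod.intCast_zmod_eq_zero_iff_dvd] at h ⊢
  push_cast at h
  exact eq_zero_of_sq_sub_mul_add_sq_eq_zero_of_sq_add_self_add_one_ne_zero
    (ZMod.sq_add_self_add_one_ne_zero hp) h

theorem mul_mem_loeschian_of_modEq {k k' n a b c d : ℤ} (hk : k ≠ 0)
    (hab : k * n = a ^ 2 - a * b + b ^ 2) (hca : c ≡ a [ZMOD k]) (hdb : d ≡ b [ZMOD k])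
    (hcd : c ^ 2 - c * d + d ^ 2 = k * k') : k' * n ∈ loeschian := by
  have hab0 : a ^ 2 - a * b + b ^ 2 ≡ 0 [ZMOD k] :=
    hab ▸ Int.modEq_zero_iff_dvd.2 (dvd_mul_right k n)
  have hxk : a * c - a * d + b * d ≡ 0 [ZMOD k] := by
    refine (((hca.mul_left a).sub (hdb.mul_left a)).add (hdb.mul_left b)).trans ?_
    simpa only [sq] using hab0
  have hyk : c * b - a * d ≡ 0 [ZMOD k] := by
    simpa using (hca.mul_right b).sub (hdb.mul_left a)
  obtain ⟨x, hx⟩ := Int.modEq_zero_iff_dvd.1 hxk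
  obtain ⟨y, hy⟩ := Int.modEq_zero_iff_dvd.1 hyk
  -- `(a + bω)(c + dω²) = (ac - ad + bd) + (bc - ad)ω`, and `c + dω ≡ a + bω (mod k)`
  have hnorm : (a ^ 2 - a * b + b ^ 2) * (c ^ 2 - c * d + d ^ 2) =
      (a * c - a * d + b * d) ^ 2 - (a * c - a * d + b * d) * (c * b - a * d) +
        (c * b - a * d) ^ 2 := by
    ring
  rw [← hab, hcd, hx, hy] at hnorm
  refine ⟨x, y, mul_left_cancel₀ (pow_ne_zero 2 hk) ?_⟩
  linear_combination hnorm

theorem exists_pos_lt_mul_mem_loeschian {k n : ℤ} (hk : 1 < k) (hkn : ¬k ∣ n)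
    (h : k * n ∈ loeschian) : ∃ k', 0 < k' ∧ k' < k ∧ k' * n ∈ loeschian := by
  obtain ⟨a, b, hab⟩ := h
  obtain ⟨c, hca, hc⟩ := Int.exists_modEq_two_mul_abs_le (by omega : 0 < k) a
  obtain ⟨d, hdb, hd⟩ := Int.exists_modEq_two_mul_abs_le (by omega : 0 < k) b
  have hcd : c ^ 2 - c * d + d ^ 2 ≡ 0 [ZMOD k] :=
    (((hca.pow 2).sub (hca.mul hdb)).add (hdb.pow 2)).trans
      (hab ▸ Int.modEq_zero_iff_dvd.2 (dvd_mul_right k n))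
  obtain ⟨k', hk'⟩ := Int.modEq_zero_iff_dvd.1 hcd
  refine ⟨k', ?_, ?_, mul_mem_loeschian_of_modEq (by omega) hab hca hdb hk'⟩
  · have hk'0 : 0 ≤ k' :=
      nonneg_of_mul_nonneg_right (hk' ▸ sq_sub_mul_add_sq_nonneg c d) (by omega)
    refine hk'0.lt_of_ne fun hzero => hkn ?_
    obtain ⟨rfl, rfl⟩ := eq_zero_of_sq_sub_mul_add_sq_eq_zero (by rw [hk', ← hzero, mul_zero])
    obtain ⟨a, rfl⟩ : k ∣ a := by simpa using hca.dvd
    obtain ⟨b, rfl⟩ : k ∣ b := by simpa using hdb.dvd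
    refine ⟨a ^ 2 - a * b + b ^ 2, mul_left_cancel₀ (by omega : k ≠ 0) ?_⟩
    linear_combination hab
  · have : 4 * (k * k') ≤ 3 * k ^ 2 := by
      rw [← hk']
      nlinarith [abs_mul_abs_self c, abs_mul_abs_self d, neg_abs_le (c * d), abs_mul c d,
        mul_le_mul hc hd (by positivity) (by omega), abs_nonneg c, abs_nonneg d]
    nlinarith

theorem Nat.Prime.mem_loeschian_of_mul_mem {p k : ℕ} (hp : p.Prime) (hk : 0 < k) (hkp : k < p)
    (h : (k * p : ℤ) ∈ loeschian) : (p : ℤ) ∈ loeschian := by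
  induction k using Nat.strong_induction_on with
  | _ k ih =>
    obtain rfl | hk1 := (Nat.one_le_iff_ne_zero.2 hk.ne').eq_or_lt
    · simpa using h
    have hkn : ¬(k : ℤ) ∣ p := fun hd =>
      (hp.eq_one_or_self_of_dvd k (Int.natCast_dvd_natCast.1 hd)).elim (by omega) (by omega)
    obtain ⟨k', hk'0, hk'k, hk'⟩ := exists_pos_lt_mul_mem_loeschian (by exact_mod_cast hk1) hkn h
    lift k' to ℕ using hk'0.le
    exact ih k' (by omega) (by omega) (by omega) hk'

theorem Nat.Prime.mem_loeschian {p : ℕ} (hp : p.Prime) (h : p % 3 ≠ 2) : (p : ℤ) ∈ loeschian := by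
  have : Fact p.Prime := ⟨hp⟩
  obtain h3 | h3 : p % 3 = 0 ∨ p % 3 = 1 := by omega
  · obtain rfl : p = 3 := ((Nat.prime_dvd_prime_iff_eq Nat.prime_three hp).1 (by omega)).symm
    exact ⟨1, -1, by norm_num⟩
  obtain ⟨w, hw⟩ := ZMod.exists_sq_add_self_add_one_eq_zero h3
  obtain ⟨c, hcmod, hc⟩ := Int.exists_modEq_two_mul_abs_le (Int.natCast_pos.2 hp.pos) (w.val : ℤ)
  obtain ⟨k, hk⟩ : (p : ℤ) ∣ c ^ 2 + c + 1 := by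
    have hcw : (c : ZMod p) = w := by
      rw [(ZMod.intCast_eq_intCast_iff _ _ _).2 hcmod]
      simp
    rw [← ZMod.intCast_zmod_eq_zero_iff_dvd]
    push_cast
    rw [hcw, hw]
  have hp2 : (2 : ℤ) ≤ p := by exact_mod_cast hp.two_le
  have hk0 : 0 < k := by nlinarith [sq_nonneg (2 * c + 1)]
  have hkp : k < p := by nlinarith [sq_abs c, abs_nonneg c, le_abs_self c]
  lift k to ℕ using hk0.le
  refine hp.mem_loeschian_of_mul_mem (k := k) (by omega) (by omega) ⟨c, -1, ?_⟩
  linear_combination -hk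

theorem exists_mem_loeschian_eq_sq_mul {p : ℕ} [Fact p.Prime] (hp : p % 3 = 2) {t : ℤ}
    (ht : t ∈ loeschian) (hpt : (p : ℤ) ∣ t) : ∃ s ∈ loeschian, t = p ^ 2 * s := by
  obtain ⟨m, n, rfl⟩ := ht
  obtain ⟨⟨m, rfl⟩, ⟨n, rfl⟩⟩ := Int.dvd_and_dvd_of_prime_dvd_sq_sub_mul_add_sq hp hpt
  exact ⟨_, ⟨m, n, rfl⟩, by ring⟩

theorem even_factorization_of_mem_loeschian {p : ℕ} (hp : p.Prime) (h3 : p % 3 = 2) {t : ℕ}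
    (ht : (t : ℤ) ∈ loeschian) : Even (t.factorization p) := by
  have : Fact p.Prime := ⟨hp⟩
  induction t using Nat.strong_induction_on with
  | _ t ih =>
    obtain rfl | ht0 := eq_or_ne t 0
    · simp
    by_cases hpt : p ∣ t
    swap
    · simp [Nat.factorization_eq_zero_of_not_dvd hpt]
    obtain ⟨s, hs, hts⟩ := exists_mem_loeschian_eq_sq_mul h3 ht (Int.natCast_dvd_natCast.2 hpt)
    lift s to ℕ using nonneg_of_mem_loeschian hs
    replace hts : t = p ^ 2 * s := by exact_mod_cast hts
    have hs0 : s ≠ 0 := by rintro rfl; simp_all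
    have hst : s < t :=
      hts ▸ lt_mul_left (Nat.pos_of_ne_zero hs0) (Nat.one_lt_pow two_ne_zero hp.one_lt)
    rw [hts, Nat.factorization_mul (pow_ne_zero 2 hp.ne_zero) hs0, hp.factorization_pow]
    simpa [parity_simps] using ih s hst hs

theorem mem_loeschian_of_even_factorization {t : ℕ}
    (h : ∀ p : ℕ, p.Prime → p % 3 = 2 → Even (t.factorization p)) : (t : ℤ) ∈ loeschian := by
  obtain rfl | ht := eq_or_ne t 0
  · exact ⟨0, 0, by simp⟩
  rw [← Nat.prod_factorization_pow_eq_self ht, Nat.cast_finsuppProd]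
  refine Submonoid.prod_mem _ fun p hpt => ?_
  have hp : p.Prime := Nat.prime_of_mem_primeFactors (by simpa using hpt)
  by_cases h3 : p % 3 = 2
  · obtain ⟨j, hj⟩ := h p hp h3
    simpa [hj, ← two_mul, pow_mul'] using sq_mem_loeschian ((p : ℤ) ^ j)
  · exact pow_mem (hp.mem_loeschian h3) _

theorem Nat.Prime.mod_three_eq_two_iff {p : ℕ} (hp : p.Prime) : p % 3 = 2 ↔ p = 2 ∨ p % 6 = 5 := by
  rcases hp.eq_two_or_odd with rfl | h <;> omega

theorem euler_6k1_general (t : ℕ) :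
    (∃ m n : ℤ, (t : ℤ) = m ^ 2 - m * n + n ^ 2) ↔
      ∀ p : ℕ, p.Prime → (p = 2 ∨ p % 6 = 5) → Even (t.factorization p) :=
  ⟨fun h _ hp h6 => even_factorization_of_mem_loeschian hp (hp.mod_three_eq_two_iff.2 h6) h,
    fun h => mem_loeschian_of_even_factorization fun p hp h3 =>
      h p hp (hp.mod_three_eq_two_iff.1 h3)⟩

theorem euler_6k1 (t : ℕ) (ht : 0 < t) :
    (∃ m n : ℤ, (t : ℤ) = m ^ 2 - m * n + n ^ 2) ↔
      ∀ p : ℕ, p.Prime → (p = 2 ∨ p % 6 = 5) → Even (t.factorization p) :=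
  euler_6k1_general t
end

section
/- If a, b, c, d are integers satisfying a² + b² + c² = 3d², then the equation 2(a² + b²) = s² + 3r² has a solution in integers r, s. -/
/-!
Let `S` be the set of integers `u² + 3v²`, a multiplicative monoid. By Thue's lemma (here via
Dirichlet approximation) an odd `n` modulo which `-3` is a square lies in `S`; splitting off the
square part of `n`, an odd `n` lies in `S` as soon as `-3` is a square modulo every prime occurring
to an odd power in `n`. For such a prime `q` of `a² + b² = 3d² - c²`, both `-1` and `3` are squares
modulo `q`, by reduction to coprime representations. Modulo 4, `a, b, c, d` are either all even
(divide by 2 and descend) or all odd, and then `2(a² + b²) = 4n` with `n` odd.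
-/

/-- The integers `u ^ 2 + 3 * v ^ 2`, realised as the norms from `ℤ√-3`. -/
def sqAddThreeSq : Submonoid ℤ := MonoidHom.mrange (Zsqrtd.normMonoidHom (d := -3))

theorem mem_sqAddThreeSq {n : ℤ} : n ∈ sqAddThreeSq ↔ ∃ u v : ℤ, n = u ^ 2 + 3 * v ^ 2 := by
  simp only [sqAddThreeSq, MonoidHom.mem_mrange, Zsqrtd.normMonoidHom, MonoidHom.coe_mk,
    OneHom.coe_mk, Zsqrtd.norm_def]
  constructor
  · rintro ⟨z, rfl⟩
    exact ⟨z.re, z.im, by ring⟩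
  · rintro ⟨u, v, rfl⟩
    exact ⟨⟨u, v⟩, by ring⟩

theorem sq_mem_sqAddThreeSq (m : ℤ) : m ^ 2 ∈ sqAddThreeSq :=
  mem_sqAddThreeSq.2 ⟨m, 0, by ring⟩

theorem exists_sq_le_and_mul_sub_mul_sq_lt {n : ℕ} (hn : 0 < n) (t : ℤ) :
    ∃ j k : ℤ, 0 < k ∧ k ^ 2 ≤ n ∧ (k * t - j * n) ^ 2 < n := by
  obtain ⟨j, k, hk0, hkN, hjk⟩ :=
    Real.exists_int_int_abs_mul_sub_le ((t : ℝ) / n) (Nat.sqrt_pos.2 hn)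
  refine ⟨j, k, hk0, ?_, ?_⟩
  · have : (Nat.sqrt n : ℤ) ^ 2 ≤ n := by exact_mod_cast Nat.sqrt_le' n
    nlinarith
  have hn' : (0 : ℝ) < n := by exact_mod_cast hn
  have hN : (n : ℝ) < (Nat.sqrt n + 1) ^ 2 := by exact_mod_cast Nat.lt_succ_sqrt' n
  have hx : |((k * t - j * n : ℤ) : ℝ)| ≤ n * (1 / (Nat.sqrt n + 1)) := by
    rw [show ((k * t - j * n : ℤ) : ℝ) = n * (k * (t / n) - j) by push_cast; field_simp,
      abs_mul, abs_of_pos hn']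
    exact mul_le_mul_of_nonneg_left hjk hn'.le
  have : ((k * t - j * n : ℤ) : ℝ) ^ 2 < n :=
    calc ((k * t - j * n : ℤ) : ℝ) ^ 2 = |((k * t - j * n : ℤ) : ℝ)| ^ 2 := (sq_abs _).symm
      _ ≤ (n * (1 / (Nat.sqrt n + 1))) ^ 2 := pow_le_pow_left₀ (abs_nonneg _) hx 2
      _ = n * (n / (Nat.sqrt n + 1) ^ 2) := by rw [mul_pow, div_pow]; ring
      _ < n * 1 := mul_lt_mul_of_pos_left ((div_lt_one (by positivity)).2 hN) hn'
      _ = n := mul_one _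
  exact_mod_cast this

theorem natCast_mem_sqAddThreeSq_of_isSquare_neg_three {n : ℕ} (hn : Odd n)
    (h : IsSquare (-3 : ZMod n)) : (n : ℤ) ∈ sqAddThreeSq := by
  obtain ⟨s, hs⟩ := h
  set t : ℤ := s.cast
  have ht : (n : ℤ) ∣ t ^ 2 + 3 := by
    rw [← ZMod.intCast_zmod_eq_zero_iff_dvd]
    push_cast [t, ZMod.intCast_zmod_cast]
    linear_combination -hs
  obtain ⟨j, k, hk0, hk2, hx2⟩ := exists_sq_le_and_mul_sub_mul_sq_lt hn.pos t
  set x := k * t - j * n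
  obtain ⟨m, hm⟩ : (n : ℤ) ∣ x ^ 2 + 3 * k ^ 2 := by
    rw [show x ^ 2 + 3 * k ^ 2 = k ^ 2 * (t ^ 2 + 3) + n * (j * (j * n - 2 * k * t)) by ring]
    exact dvd_add (dvd_mul_of_dvd_right ht _) (dvd_mul_right _ _)
  -- `x² + 3k² = m n` with `0 < m < 4`: `m = 2` is impossible modulo 4 and `m = 3` forces `3 ∣ x`.
  have hm0 : 0 < m := by nlinarith
  have hm4 : m < 4 := by nlinarith
  interval_cases m
  · exact mem_sqAddThreeSq.2 ⟨x, k, by linarith⟩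
  · obtain ⟨r, rfl⟩ := hn
    have key : ∀ X K R : ZMod 4, X ^ 2 + 3 * K ^ 2 ≠ (2 * R + 1) * 2 := by decide
    exact absurd (by exact_mod_cast congrArg (Int.cast : ℤ → ZMod 4) hm) (key x k r)
  · obtain ⟨y, hy⟩ : (3 : ℤ) ∣ x :=
      Int.prime_three.dvd_of_dvd_pow (n := 2) ⟨n - k ^ 2, by linarith⟩
    rw [hy] at hm
    exact mem_sqAddThreeSq.2 ⟨k, y, by linarith⟩

theorem natCast_mem_sqAddThreeSq_of_odd {n : ℕ} (hn : Odd n)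
    (h : ∀ q, q.Prime → Odd (padicValNat q n) → IsSquare (-3 : ZMod q)) :
    (n : ℤ) ∈ sqAddThreeSq := by
  obtain ⟨k, m, rfl, hk⟩ := Nat.sq_mul_squarefree n
  have hm : m ≠ 0 := by rintro rfl; simp at hn
  push_cast
  refine mul_mem (sq_mem_sqAddThreeSq m) ?_
  rw [← Nat.prod_primeFactors_of_squarefree hk]
  push_cast
  refine prod_mem fun q hq => ?_
  have hqp := Nat.prime_of_mem_primeFactors hq
  have hqk := Nat.dvd_of_mem_primeFactors hq
  have := Fact.mk hqp
  refine natCast_mem_sqAddThreeSq_of_isSquare_neg_three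
    (hn.of_dvd_nat (dvd_mul_of_dvd_right hqk _)) (h q hqp ?_)
  rw [padicValNat.mul (pow_ne_zero 2 hm) hk.ne_zero, padicValNat.pow,
    ← Nat.factorization_def k hqp, Nat.factorization_eq_one_of_squarefree hk hqp hqk]
  exact odd_two_mul_add_one _

theorem padicValInt_neg (p : ℕ) (z : ℤ) : padicValInt p (-z) = padicValInt p z := by
  simp [padicValInt]

theorem isSquare_of_odd_padicValInt_sq_sub_mul_sq {p : ℕ} [Fact p.Prime] {k x y : ℤ}
    (h : Odd (padicValInt p (x ^ 2 - k * y ^ 2))) : IsSquare (k : ZMod p) := by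
  have hxy : 0 < Int.gcd x y := by
    refine Int.gcd_pos_iff.2 (not_and_or.1 fun hxy => ?_)
    simp [hxy.1, hxy.2] at h
  obtain ⟨g, x, y, hg, hcop, rfl, rfl⟩ := Int.exists_gcd_one' hxy
  have hsplit : (x * g) ^ 2 - k * (y * g) ^ 2 = (g : ℤ) ^ 2 * (x ^ 2 - k * y ^ 2) := by ring
  have hne : x ^ 2 - k * y ^ 2 ≠ 0 := by
    rintro h0
    simp [hsplit, h0] at h
  rw [hsplit, padicValInt.mul (by positivity) hne, padicValInt, Int.natAbs_pow,
    Int.natAbs_natCast, padicValNat.pow] at h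
  have hdvd : (p : ℤ) ∣ x ^ 2 - k * y ^ 2 := by
    by_contra hnd
    rw [padicValInt.eq_zero_of_not_dvd hnd] at h
    exact Nat.not_even_iff_odd.2 h (by simp)
  have hy : (y : ZMod p) ≠ 0 := by
    intro hy0
    rw [ZMod.intCast_zmod_eq_zero_iff_dvd] at hy0
    have hpx : (p : ℤ) ∣ x := by
      refine (Nat.prime_iff_prime_int.1 Fact.out).dvd_of_dvd_pow (n := 2) ?_
      rw [show x ^ 2 = (x ^ 2 - k * y ^ 2) + k * y ^ 2 by ring]
      exact dvd_add hdvd (dvd_mul_of_dvd_right (dvd_pow hy0 two_ne_zero) _)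
    have := Int.dvd_gcd hpx hy0
    rw [hcop] at this
    exact Nat.Prime.not_dvd_one Fact.out this
  have hmod : (x : ZMod p) ^ 2 - k * (y : ZMod p) ^ 2 = 0 := by
    exact_mod_cast (ZMod.intCast_zmod_eq_zero_iff_dvd _ p).2 hdvd
  exact ⟨x / y, by field_simp; linear_combination -hmod⟩

section

variable {a b c d : ℤ}

theorem isSquare_neg_three_of_odd_padicValInt {p : ℕ} [Fact p.Prime]
    (h : a ^ 2 + b ^ 2 + c ^ 2 = 3 * d ^ 2) (hodd : Odd (padicValInt p (a ^ 2 + b ^ 2))) :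
    IsSquare (-3 : ZMod p) := by
  have hneg_one : IsSquare ((-1 : ℤ) : ZMod p) :=
    isSquare_of_odd_padicValInt_sq_sub_mul_sq (x := a) (y := b) (by ring_nf at hodd ⊢; exact hodd)
  have hthree : IsSquare ((3 : ℤ) : ZMod p) :=
    isSquare_of_odd_padicValInt_sq_sub_mul_sq (x := c) (y := d)
      (by rwa [show c ^ 2 - 3 * d ^ 2 = -(a ^ 2 + b ^ 2) by linear_combination h, padicValInt_neg])
  simpa using hneg_one.mul hthree

theorem two_dvd_sub_of_sq_add_sq_add_sq_eq (h : a ^ 2 + b ^ 2 + c ^ 2 = 3 * d ^ 2) :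
    2 ∣ a - d ∧ 2 ∣ b - d ∧ 2 ∣ c - d := by
  have key : ∀ a b c d : ZMod 4, a ^ 2 + b ^ 2 + c ^ 2 = 3 * d ^ 2 →
      2 * (a - d) = 0 ∧ 2 * (b - d) = 0 ∧ 2 * (c - d) = 0 := by
    decide
  have two_dvd (x : ℤ) (hx : (2 : ZMod 4) * x = 0) : 2 ∣ x := by
    have : (4 : ℤ) ∣ 2 * x := (ZMod.intCast_zmod_eq_zero_iff_dvd _ 4).1 (by push_cast; exact hx)
    omega
  obtain ⟨ha, hb, hc⟩ := key a b c d (by exact_mod_cast congrArg (Int.cast : ℤ → ZMod 4) h)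
  exact ⟨two_dvd _ (by exact_mod_cast ha), two_dvd _ (by exact_mod_cast hb),
    two_dvd _ (by exact_mod_cast hc)⟩

theorem two_mul_sq_add_sq_mem_of_odd (h : a ^ 2 + b ^ 2 + c ^ 2 = 3 * d ^ 2) (hd : Odd d) :
    2 * (a ^ 2 + b ^ 2) ∈ sqAddThreeSq := by
  obtain ⟨ha, hb, -⟩ := two_dvd_sub_of_sq_add_sq_add_sq_eq h
  rw [Int.odd_iff] at hd
  obtain ⟨i, rfl⟩ : Odd a := by rw [Int.odd_iff]; omega
  obtain ⟨j, rfl⟩ : Odd b := by rw [Int.odd_iff]; omega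
  obtain ⟨n, hn⟩ : ∃ n : ℕ, (n : ℤ) = 2 * (i ^ 2 + i + j ^ 2 + j) + 1 :=
    ⟨_, Int.toNat_of_nonneg (by nlinarith)⟩
  have hab : (2 * i + 1) ^ 2 + (2 * j + 1) ^ 2 = 2 * n := by rw [hn]; ring
  have hn_odd : Odd n := by
    rw [← Int.odd_coe_nat, hn]
    exact odd_two_mul_add_one _
  rw [hab, show (2 : ℤ) * (2 * n) = 2 ^ 2 * n by ring]
  refine mul_mem (sq_mem_sqAddThreeSq 2) <|
    natCast_mem_sqAddThreeSq_of_odd hn_odd fun q hq hodd => ?_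
  have := Fact.mk hq
  have hq2 : ¬ (q : ℤ) ∣ 2 := by
    intro hq2
    obtain rfl := (Nat.prime_dvd_prime_iff_eq hq Nat.prime_two).1 (by exact_mod_cast hq2)
    exact Nat.not_even_iff_odd.2 hn_odd (even_iff_two_dvd.2 (dvd_of_one_le_padicValNat hodd.pos))
  refine isSquare_neg_three_of_odd_padicValInt h ?_
  rwa [hab, padicValInt.mul two_ne_zero (by exact_mod_cast hn_odd.pos.ne'),
    padicValInt.eq_zero_of_not_dvd hq2, zero_add, padicValInt.of_nat]

end

theorem rs_solution (a b c d : ℤ) (h : a ^ 2 + b ^ 2 + c ^ 2 = 3 * d ^ 2) :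
    ∃ r s : ℤ, 2 * (a ^ 2 + b ^ 2) = s ^ 2 + 3 * r ^ 2 := by
  suffices hmem : 2 * (a ^ 2 + b ^ 2) ∈ sqAddThreeSq by
    obtain ⟨s, r, hsr⟩ := mem_sqAddThreeSq.1 hmem
    exact ⟨r, s, hsr⟩
  induction hn : d.natAbs using Nat.strong_induction_on generalizing a b c d with
  | _ n ih =>
  rcases Int.even_or_odd' d with ⟨d, rfl | rfl⟩
  · rcases eq_or_ne d 0 with rfl | hd
    · obtain ⟨rfl, rfl⟩ : a = 0 ∧ b = 0 := by
        constructor <;> nlinarith [sq_nonneg a, sq_nonneg b, sq_nonneg c]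
      exact mem_sqAddThreeSq.2 ⟨0, 0, by ring⟩
    obtain ⟨ha, hb, hc⟩ := two_dvd_sub_of_sq_add_sq_add_sq_eq h
    obtain ⟨a, rfl⟩ : 2 ∣ a := by omega
    obtain ⟨b, rfl⟩ : 2 ∣ b := by omega
    obtain ⟨c, rfl⟩ : 2 ∣ c := by omega
    rw [show 2 * ((2 * a) ^ 2 + (2 * b) ^ 2) = 2 ^ 2 * (2 * (a ^ 2 + b ^ 2)) by ring]
    exact mul_mem (sq_mem_sqAddThreeSq 2) (ih _ (by omega) a b c d (by linarith) rfl)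
  · exact two_mul_sq_add_sq_mem_of_odd h (odd_two_mul_add_one d)
end

section
/- For every n ≥ 2, the number of equilateral triangles with vertices in {0,...,n}³ satisfies ET(n) ≥ 8(2n−1)(n² − n + 1). -/
/-- `T` is an equilateral triangle: a 3-element set with all pairwise
(squared) distances equal. -/
def IsEqTri (T : Finset (ℤ × ℤ × ℤ)) : Prop :=
  T.card = 3 ∧
  ∀ p ∈ T, ∀ q ∈ T, ∀ r ∈ T, ∀ s ∈ T, p ≠ q → r ≠ s → d2 p q = d2 r s

/-- Membership of a point in the grid `{0,…,n}³`. -/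
def InGrid (n : ℕ) (p : ℤ × ℤ × ℤ) : Prop :=
  p.1 ∈ Set.Icc 0 (n : ℤ) ∧ p.2.1 ∈ Set.Icc 0 (n : ℤ) ∧ p.2.2 ∈ Set.Icc 0 (n : ℤ)

/-- The number of equilateral triangles with vertices in `{0,…,n}³`. -/
noncomputable def ET (n : ℕ) : ℕ :=
  {T : Finset (ℤ × ℤ × ℤ) | IsEqTri T ∧ ∀ p ∈ T, InGrid n p}.ncard

open Finset Function

lemma d2_eq_zero_iff {p q : ℤ × ℤ × ℤ} : d2 p q = 0 ↔ p = q := by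
  refine ⟨fun h => ?_, fun h => by simp [h, d2]⟩
  rw [d2, add_eq_zero_iff_of_nonneg (by positivity) (by positivity),
    add_eq_zero_iff_of_nonneg (by positivity) (by positivity)] at h
  simp only [pow_eq_zero_iff two_ne_zero, sub_eq_zero] at h
  exact Prod.ext h.1.1 (Prod.ext h.1.2 h.2)

lemma injective_of_d2_eq {f : ℤ × ℤ × ℤ → ℤ × ℤ × ℤ} (hf : ∀ p q, d2 (f p) (f q) = d2 p q) :
    Injective f :=
  fun p q h => d2_eq_zero_iff.1 (by rw [← hf, h, d2_eq_zero_iff])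

lemma d2_add_left (t p q : ℤ × ℤ × ℤ) : d2 (t + p) (t + q) = d2 p q := by
  simp only [d2, Prod.fst_add, Prod.snd_add]
  ring

lemma IsEqTri.image {T : Finset (ℤ × ℤ × ℤ)} {f : ℤ × ℤ × ℤ → ℤ × ℤ × ℤ}
    (hf : ∀ p q, d2 (f p) (f q) = d2 p q) (hT : IsEqTri T) : IsEqTri (T.image f) := by
  refine ⟨by rw [card_image_of_injective T (injective_of_d2_eq hf), hT.1], ?_⟩
  simp only [mem_image]
  rintro _ ⟨p, hp, rfl⟩ _ ⟨q, hq, rfl⟩ _ ⟨r, hr, rfl⟩ _ ⟨s, hs, rfl⟩ hpq hrs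
  rw [hf, hf]
  exact hT.2 p hp q hq r hr s hs (ne_of_apply_ne f hpq) (ne_of_apply_ne f hrs)

def reflectIf (k : ℕ) (b : Bool) (a : ℤ) : ℤ := if b then k - a else a

/-- `e` selects the coordinates reflected in the midplanes of the cube `[0, k]³`. -/
def cubeSymm (k : ℕ) (e : Bool × Bool × Bool) (p : ℤ × ℤ × ℤ) : ℤ × ℤ × ℤ :=
  (reflectIf k e.1 p.1, reflectIf k e.2.1 p.2.1, reflectIf k e.2.2 p.2.2)

lemma d2_cubeSymm (k : ℕ) (e : Bool × Bool × Bool) (p q : ℤ × ℤ × ℤ) :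
    d2 (cubeSymm k e p) (cubeSymm k e q) = d2 p q := by
  obtain ⟨_ | _, _ | _, _ | _⟩ := e <;>
    simp only [d2, cubeSymm, reflectIf, Bool.false_eq_true, ↓reduceIte] <;> ring

lemma d2_add_cubeSymm (k : ℕ) (e : Bool × Bool × Bool) (t p q : ℤ × ℤ × ℤ) :
    d2 (t + cubeSymm k e p) (t + cubeSymm k e q) = d2 p q := by
  rw [d2_add_left, d2_cubeSymm]

lemma reflectIf_mem_Icc {k : ℕ} (b : Bool) {a : ℤ} (ha : a ∈ Set.Icc 0 (k : ℤ)) :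
    reflectIf k b a ∈ Set.Icc 0 (k : ℤ) := by
  cases b <;> simp only [reflectIf, Set.mem_Icc] at ha ⊢ <;> omega

lemma InGrid.add_cubeSymm {n k : ℕ} (hkn : k ≤ n) {t p : ℤ × ℤ × ℤ} (ht : InGrid (n - k) t)
    (hp : InGrid k p) (e : Bool × Bool × Bool) : InGrid n (t + cubeSymm k e p) := by
  obtain ⟨hp1, hp2, hp3⟩ := hp
  have h1 := reflectIf_mem_Icc e.1 hp1
  have h2 := reflectIf_mem_Icc e.2.1 hp2
  have h3 := reflectIf_mem_Icc e.2.2 hp3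
  simp only [InGrid, Set.mem_Icc, Prod.fst_add, Prod.snd_add, cubeSymm] at ht h1 h2 h3 ⊢
  omega

def cubeCopy (k : ℕ) (B : Finset (ℤ × ℤ × ℤ)) (e : Bool × Bool × Bool) (t : ℤ × ℤ × ℤ) :
    Finset (ℤ × ℤ × ℤ) :=
  B.image fun p => t + cubeSymm k e p

noncomputable def gridPoints (m : ℕ) : Finset (ℤ × ℤ × ℤ) :=
  Icc 0 (m : ℤ) ×ˢ Icc 0 (m : ℤ) ×ˢ Icc 0 (m : ℤ)

lemma mem_gridPoints {m : ℕ} {p : ℤ × ℤ × ℤ} : p ∈ gridPoints m ↔ InGrid m p := by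
  simp only [gridPoints, mem_product, mem_Icc, InGrid, Set.mem_Icc]

lemma card_gridPoints (m : ℕ) : #(gridPoints m) = (m + 1) ^ 3 := by
  simp only [gridPoints, card_product, Int.card_Icc, sub_zero]
  norm_cast
  ring

noncomputable def cubeCopies (n k : ℕ) (B : Finset (ℤ × ℤ × ℤ)) : Finset (Finset (ℤ × ℤ × ℤ)) :=
  (univ ×ˢ gridPoints (n - k)).image fun x => cubeCopy k B x.1 x.2

lemma cubeCopies_subset {n k : ℕ} (hkn : k ≤ n) {B : Finset (ℤ × ℤ × ℤ)} (hB : IsEqTri B)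
    (hBk : ∀ p ∈ B, InGrid k p) :
    ↑(cubeCopies n k B) ⊆ {T : Finset (ℤ × ℤ × ℤ) | IsEqTri T ∧ ∀ p ∈ T, InGrid n p} := by
  simp only [Set.subset_def, cubeCopies, coe_image, Set.mem_image, mem_coe, mem_product,
    mem_univ, true_and, mem_gridPoints]
  rintro _ ⟨⟨e, t⟩, ht, rfl⟩
  refine ⟨hB.image (d2_add_cubeSymm k e t), ?_⟩
  simp only [cubeCopy, mem_image]
  rintro _ ⟨p, hp, rfl⟩
  exact ht.add_cubeSymm hkn (hBk p hp) e

lemma sum_cubeCopy (k : ℕ) (B : Finset (ℤ × ℤ × ℤ)) (e : Bool × Bool × Bool)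
    (t : ℤ × ℤ × ℤ) : ∑ p ∈ cubeCopy k B e t, p = #B • t + ∑ p ∈ B, cubeSymm k e p := by
  have hinj : Injective fun p => t + cubeSymm k e p :=
    injective_of_d2_eq (d2_add_cubeSymm k e t)
  rw [cubeCopy, sum_image fun p _ q _ h => hinj h, sum_add_distrib, sum_const]

/-- The vertex sum `3 • t + ∑ p ∈ B, cubeSymm k e p` of a copy determines `t` when its second
term only varies in a box of side `2 < 3`; then `e` is determined once the eight images of `B` are
distinct. -/
lemma cubeCopy_injective {k : ℕ} {B : Finset (ℤ × ℤ × ℤ)} (hB : #B = 3)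
    (hsymm : Injective fun e => B.image (cubeSymm k e)) (c : ℤ × ℤ × ℤ)
    (hsum : ∀ e, InGrid 2 (∑ p ∈ B, cubeSymm k e p - c)) :
    Injective fun x : (Bool × Bool × Bool) × (ℤ × ℤ × ℤ) => cubeCopy k B x.1 x.2 := by
  rintro ⟨e, t⟩ ⟨e', t'⟩ h
  simp only at h
  have hsums := congrArg (fun T => ∑ p ∈ T, p) h
  simp only [sum_cubeCopy, hB] at hsums
  have ht : t = t' := by
    have h1 := hsum e
    have h2 := hsum e'
    simp only [InGrid, Set.mem_Icc, Prod.fst_sub, Prod.snd_sub] at h1 h2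
    simp only [Prod.ext_iff, Prod.fst_add, Prod.snd_add, Prod.smul_fst, Prod.smul_snd] at hsums
    simp only [nsmul_eq_mul, Nat.cast_ofNat] at hsums
    ext <;> omega
  subst ht
  have himage :
      (B.image (cubeSymm k e)).image (t + ·) = (B.image (cubeSymm k e')).image (t + ·) := by
    simpa only [image_image, cubeCopy, comp_def] using h
  rw [hsymm (image_injective (add_right_injective t) himage)]

lemma card_cubeCopies {n k : ℕ} {B : Finset (ℤ × ℤ × ℤ)}
    (hinj : Injective fun x : (Bool × Bool × Bool) × (ℤ × ℤ × ℤ) => cubeCopy k B x.1 x.2) :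
    #(cubeCopies n k B) = 8 * (n - k + 1) ^ 3 := by
  rw [cubeCopies, card_image_of_injective _ hinj, card_product, card_univ, card_gridPoints]
  rfl

lemma image_ne_image_of_d2_ne {f g : ℤ × ℤ × ℤ → ℤ × ℤ × ℤ}
    (hf : ∀ p q, d2 (f p) (f q) = d2 p q) (hg : ∀ p q, d2 (g p) (g q) = d2 p q)
    {B B' : Finset (ℤ × ℤ × ℤ)} {a b : ℤ × ℤ × ℤ} (ha : a ∈ B) (hb : b ∈ B)
    (hB' : ∀ p ∈ B', ∀ q ∈ B', d2 p q ≠ d2 a b) : B.image f ≠ B'.image g := by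
  intro h
  have hfa : f a ∈ B'.image g := h ▸ mem_image_of_mem f ha
  have hfb : f b ∈ B'.image g := h ▸ mem_image_of_mem f hb
  obtain ⟨p, hp, hpa⟩ := mem_image.1 hfa
  obtain ⟨q, hq, hqb⟩ := mem_image.1 hfb
  exact hB' p hp q hq (by rw [← hg, hpa, hqb, hf])

lemma disjoint_cubeCopies {n k k' : ℕ} {B B' : Finset (ℤ × ℤ × ℤ)} {a b : ℤ × ℤ × ℤ}
    (ha : a ∈ B) (hb : b ∈ B) (hB' : ∀ p ∈ B', ∀ q ∈ B', d2 p q ≠ d2 a b) :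
    Disjoint (cubeCopies n k B) (cubeCopies n k' B') := by
  simp only [disjoint_left, cubeCopies, mem_image, not_exists, not_and]
  rintro _ ⟨⟨e, t⟩, -, rfl⟩ ⟨e', t'⟩ -
  exact (image_ne_image_of_d2_ne (d2_add_cubeSymm k e t) (d2_add_cubeSymm k' e' t') ha hb
    hB').symm

lemma finite_eqTri_inGrid (n : ℕ) :
    {T : Finset (ℤ × ℤ × ℤ) | IsEqTri T ∧ ∀ p ∈ T, InGrid n p}.Finite :=
  (gridPoints n).powerset.finite_toSet.subset fun _ hT =>
    mem_powerset.2 fun p hp => mem_gridPoints.2 (hT.2 p hp)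

def cornerTri : Finset (ℤ × ℤ × ℤ) := {(1, 0, 0), (0, 1, 0), (0, 0, 1)}

def skewTri : Finset (ℤ × ℤ × ℤ) := {(1, 0, 2), (2, 1, 0), (0, 2, 1)}

lemma isEqTri_cornerTri : IsEqTri cornerTri := by unfold IsEqTri; decide

lemma isEqTri_skewTri : IsEqTri skewTri := by unfold IsEqTri; decide

lemma cornerTri_inGrid : ∀ p ∈ cornerTri, InGrid 1 p := by
  simp only [InGrid, Set.mem_Icc]; decide

lemma skewTri_inGrid : ∀ p ∈ skewTri, InGrid 2 p := by
  simp only [InGrid, Set.mem_Icc]; decide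

lemma cubeCopy_cornerTri_injective :
    Injective fun x : (Bool × Bool × Bool) × (ℤ × ℤ × ℤ) => cubeCopy 1 cornerTri x.1 x.2 :=
  cubeCopy_injective isEqTri_cornerTri.1 (by decide) (1, 1, 1)
    (by simp only [InGrid, Set.mem_Icc]; decide)

lemma cubeCopy_skewTri_injective :
    Injective fun x : (Bool × Bool × Bool) × (ℤ × ℤ × ℤ) => cubeCopy 2 skewTri x.1 x.2 :=
  cubeCopy_injective isEqTri_skewTri.1 (by decide) (3, 3, 3)
    (by simp only [InGrid, Set.mem_Icc]; decide)

lemma disjoint_cubeCopies_cornerTri_skewTri (n : ℕ) :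
    Disjoint (cubeCopies n 1 cornerTri) (cubeCopies n 2 skewTri) :=
  disjoint_cubeCopies (a := (1, 0, 0)) (b := (0, 1, 0)) (by decide) (by decide) (by decide)

lemma pow_three_add_pred_pow_three {n : ℕ} (hn : 1 ≤ n) :
    n ^ 3 + (n - 1) ^ 3 = (2 * n - 1) * (n ^ 2 - n + 1) := by
  have hsq : n ≤ n ^ 2 := by nlinarith
  zify [hn, hsq, (by omega : 1 ≤ 2 * n)]
  ring

theorem ET_lower_bound (n : ℕ) (hn : 2 ≤ n) :
    8 * (2 * n - 1) * (n ^ 2 - n + 1) ≤ ET n := by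
  have hsub : ↑(cubeCopies n 1 cornerTri ∪ cubeCopies n 2 skewTri) ⊆
      {T : Finset (ℤ × ℤ × ℤ) | IsEqTri T ∧ ∀ p ∈ T, InGrid n p} := by
    rw [coe_union]
    exact Set.union_subset (cubeCopies_subset (by omega) isEqTri_cornerTri cornerTri_inGrid)
      (cubeCopies_subset hn isEqTri_skewTri skewTri_inGrid)
  calc 8 * (2 * n - 1) * (n ^ 2 - n + 1) = 8 * (n - 1 + 1) ^ 3 + 8 * (n - 2 + 1) ^ 3 := by
        rw [Nat.sub_add_cancel (by omega : 1 ≤ n), (by omega : n - 2 + 1 = n - 1), mul_assoc,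
          ← pow_three_add_pred_pow_three (by omega : 1 ≤ n), mul_add]
    _ = #(cubeCopies n 1 cornerTri ∪ cubeCopies n 2 skewTri) := by
        rw [card_union_of_disjoint (disjoint_cubeCopies_cornerTri_skewTri n),
          card_cubeCopies cubeCopy_cornerTri_injective, card_cubeCopies cubeCopy_skewTri_injective]
    _ ≤ ET n := by
        rw [ET, ← Set.ncard_coe_finset]
        exact Set.ncard_le_ncard hsub (finite_eqTri_inGrid n)
end
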